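/- Let a, b be rational integers with 2 ≤ a ≤ b−2 and let t, v₂, v₃ be integers with 1 ≤ t ≤ b−a, v₂ = 0 and v₃ ≠ 0. Then β(t,v₂,v₃) = t − (b−a+1)v₂ − (b−a+1)b·v₃ + v₂ρ + v₃ρ² is not totally positive. -/

import Mathlib

open IntermediateField

noncomputable section

/-- An element of a field `K` is totally positive if its image under every
real embedding of `K` is positive. -/
def TotallyPositive {K : Type*} [Field K] (x : K) : Prop :=
  ∀ φ : K →+* ℝ, 0 < φ x

/-- The element `β(t,v₂,v₃) = t − (b−a+1)v₂ − (b−a+1)b·v₃ + v₂ρ + v₃ρ²` of `ℚ(ρ) ⊆ ℝ`. -/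
def betaT (a b : ℤ) (ρ : ℝ) (t v₂ v₃ : ℤ) : ℚ⟮ρ⟯ :=
  ((t - (b - a + 1) * v₂ - (b - a + 1) * b * v₃ : ℤ) : ℚ⟮ρ⟯)
    + ((v₂ : ℤ) : ℚ⟮ρ⟯) * AdjoinSimple.gen ℚ ρ
    + ((v₃ : ℤ) : ℚ⟮ρ⟯) * AdjoinSimple.gen ℚ ρ ^ 2

set_option maxHeartbeats 1000000 in
/-- Let `2 ≤ a ≤ b−2` and `1 ≤ t ≤ b−a`, `v₂ = 0`, `v₃ ≠ 0`. Then
`β(t,v₂,v₃)` is not totally positive. -/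
theorem stmt_8 (a b : ℤ) (ha : 2 ≤ a) (hab : a ≤ b - 2)
    (ρ : ℝ) (hroot : ρ ^ 3 - ((a : ℝ) + (b : ℝ)) * ρ ^ 2 + (a : ℝ) * (b : ℝ) * ρ - 1 = 0)
    (hmax : ∀ x : ℝ, x ^ 3 - ((a : ℝ) + (b : ℝ)) * x ^ 2 + (a : ℝ) * (b : ℝ) * x - 1 = 0 → x ≤ ρ)
    (hdeg : Module.finrank ℚ ℚ⟮ρ⟯ = 3)
    (t v₂ v₃ : ℤ) (ht0 : 1 ≤ t) (ht1 : t ≤ b - a)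
    (hv₂ : v₂ = 0) (hv₃ : v₃ ≠ 0) :
    ¬ TotallyPositive (betaT a b ρ t v₂ v₃) := by
  classical
  subst hv₂
  have ha' : (2:ℝ) ≤ (a:ℝ) := by exact_mod_cast ha
  have hb' : (a:ℝ) + 2 ≤ (b:ℝ) := by
    have : (a:ℝ) ≤ (b:ℝ) - 2 := by exact_mod_cast hab
    linarith
  have ht0' : (1:ℝ) ≤ (t:ℝ) := by exact_mod_cast ht0
  have ht1' : (t:ℝ) ≤ (b:ℝ) - (a:ℝ) := by exact_mod_cast ht1
  set f : ℝ → ℝ := fun x => x^3 - ((a:ℝ)+(b:ℝ))*x^2 + (a:ℝ)*(b:ℝ)*x - 1 with hf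
  have hcont : Continuous f := by fun_prop
  set p : Polynomial ℚ :=
    Polynomial.X^3 - Polynomial.C ((a:ℚ)+(b:ℚ)) * Polynomial.X^2
      + Polynomial.C ((a:ℚ)*(b:ℚ)) * Polynomial.X - 1 with hp
  have hpmonic : p.Monic := by rw [hp]; monicity!
  have hpdeg : p.natDegree = 3 := by unfold p; compute_degree!
  have haev : ∀ x : ℝ, (Polynomial.aeval x) p = f x := by
    intro x; rw [hp]; simp [hf, map_intCast]
  have hpρ : (Polynomial.aeval ρ) p = 0 := by rw [haev]; exact hroot
  have hint : IsIntegral ℚ ρ := ⟨p, hpmonic, hpρ⟩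
  have hmin : minpoly ℚ ρ = p := by
    obtain ⟨q, hq⟩ := minpoly.dvd ℚ ρ hpρ
    have hmmonic := minpoly.monic hint
    have hdm : (minpoly ℚ ρ).natDegree = 3 := by
      rw [← IntermediateField.adjoin.finrank hint, hdeg]
    have hqm : q.Monic := hmmonic.of_mul_monic_left (hq ▸ hpmonic)
    have hq0 : q.natDegree = 0 := by
      have h := Polynomial.natDegree_mul (minpoly.ne_zero hint) hqm.ne_zero
      rw [← hq, hpdeg, hdm] at h; omega
    rw [hq, hqm.natDegree_eq_zero.mp hq0, mul_one]
  rcases hv₃.lt_or_gt with hneg | hpos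
  · -- v₃ ≤ -1 : use the real embedding coming from ρ itself
    have hρb : (b:ℝ) < ρ := by
      have hsub := intermediate_value_Ioo (by linarith : (b:ℝ) ≤ (b:ℝ)+1) hcont.continuousOn
      have hmem : (0:ℝ) ∈ Set.Ioo (f (b:ℝ)) (f ((b:ℝ)+1)) := by
        constructor <;> simp only [hf] <;> nlinarith
      obtain ⟨y, hy, hfy⟩ := hsub hmem
      exact lt_of_lt_of_le hy.1 (hmax y hfy)
    intro htp
    have h2 := htp (algebraMap ℚ⟮ρ⟯ ℝ)
    have hval : (algebraMap ℚ⟮ρ⟯ ℝ) (betaT a b ρ t 0 v₃)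
        = ((t - (b - a + 1) * 0 - (b - a + 1) * b * v₃ : ℤ) : ℝ)
          + ((0:ℤ):ℝ) * ρ + ((v₃:ℤ):ℝ) * ρ^2 := by
      simp [betaT, map_add, map_mul, map_pow, map_intCast,
        IntermediateField.AdjoinSimple.algebraMap_gen]
    rw [hval] at h2
    have hv' : (v₃:ℝ) ≤ -1 := by exact_mod_cast Int.le_sub_one_of_lt hneg
    push_cast at h2
    nlinarith [mul_pos (sub_pos.2 hρb) (show (0:ℝ) < ρ + (b:ℝ) by nlinarith),
      mul_nonneg (show (0:ℝ) ≤ -(v₃:ℝ) - 1 by linarith)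
        (show (0:ℝ) ≤ ρ^2 - ((b:ℝ)-(a:ℝ)+1)*(b:ℝ) by nlinarith)]
  · -- v₃ ≥ 1 : use the real embedding sending ρ to the small root in (0,1)
    obtain ⟨c, hc, hfc⟩ : ∃ c ∈ Set.Ioo (0:ℝ) 1, f c = 0 := by
      have hsub := intermediate_value_Ioo (by norm_num : (0:ℝ) ≤ 1) hcont.continuousOn
      have hmem : (0:ℝ) ∈ Set.Ioo (f 0) (f 1) := by
        constructor <;> simp only [hf] <;> nlinarith
      obtain ⟨c, hc, hfc⟩ := hsub hmem
      exact ⟨c, hc, hfc⟩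
    have hpc : (Polynomial.aeval c) p = 0 := by rw [haev]; exact hfc
    set pb := IntermediateField.adjoin.powerBasis hint with hpb
    have hgen : pb.gen = AdjoinSimple.gen ℚ ρ := rfl
    have hmc : (Polynomial.aeval c) (minpoly ℚ pb.gen) = 0 := by
      rw [hgen]; convert hpc using 2; rw [← hmin]; exact IntermediateField.minpoly_gen ℚ ρ
    set φ : ℚ⟮ρ⟯ →ₐ[ℚ] ℝ := pb.lift c hmc with hφ
    have hφgen : φ (AdjoinSimple.gen ℚ ρ) = c := by
      rw [← hgen, hφ]; exact pb.lift_gen c hmc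
    intro htp
    have h2 := htp φ.toRingHom
    have hval : φ.toRingHom (betaT a b ρ t 0 v₃)
        = ((t - (b - a + 1) * 0 - (b - a + 1) * b * v₃ : ℤ) : ℝ)
          + ((0:ℤ):ℝ) * c + ((v₃:ℤ):ℝ) * c^2 := by
      simp [betaT, map_add, map_mul, map_pow, map_intCast, hφgen]
    rw [hval] at h2
    have hv' : (1:ℝ) ≤ (v₃:ℝ) := by exact_mod_cast hpos
    push_cast at h2
    nlinarith [mul_nonneg (show (0:ℝ) ≤ (v₃:ℝ) - 1 by linarith)
        (show (0:ℝ) ≤ ((b:ℝ)-(a:ℝ)+1)*(b:ℝ) - c^2 by nlinarith [hc.1, hc.2]),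
      hc.1, hc.2, sq_nonneg c]
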